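/- arXiv:2107.05157 — 2 statements merged into one kernel-verified Lean document; each statement's English description precedes it below -/
import Mathlib

section
/- Existence and bounds of the static profile. Let γ > 1 and κ > 0; set p(z) = (1/γ)z^γ − (1/κ)z^{−κ} and H(ϱ) = ϱ∫₁^ϱ p(z) z^{−2} dz for ϱ > 0. Then H' : (0,∞) → ℝ is a strictly increasing bijection onto ℝ. Consequently, for any G ∈ C¹(𝕋³), the function b := (H')⁻¹ ∘ G is C¹ on 𝕋³ (and C³ if G ∈ C³), there exist constants 0 < b_* ≤ b^* with b_* ≤ b(x) ≤ b^* for all x ∈ 𝕋³, and b satisfies the static equation ∇(p ∘ b)(x) = b(x) ∇G(x) on 𝕋³. -/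
open MeasureTheory Filter

noncomputable section

/-- Points of the (fundamental domain of the) three-dimensional torus. -/
abbrev Vec3 := Fin 3 → ℝ

/-- Fundamental domain of the torus `𝕋³`. -/
def cube : Set Vec3 := Set.Icc 0 1

/-- The Lebesgue measure on the fundamental domain of `𝕋³`. -/
def μΩ : Measure Vec3 := volume.restrict cube

/-- A function on `ℝ³` is (ℤ³-)periodic, i.e. lives on the torus `𝕋³`. -/
def isPeriodic {E : Type*} (f : Vec3 → E) : Prop :=
  ∀ (x : Vec3) (k : Fin 3 → ℤ), f (x + fun i => (k i : ℝ)) = f x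

def dot3 (a b : Vec3) : ℝ := ∑ i, a i * b i

def sq3 (a : Vec3) : ℝ := dot3 a a

def mdot3 (A B : Fin 3 → Fin 3 → ℝ) : ℝ := ∑ i, ∑ j, A i j * B i j

/-- Gradient of a scalar function on `ℝ³`. -/
def grad (f : Vec3 → ℝ) (x : Vec3) : Vec3 := fun i => fderiv ℝ f x (Pi.single i 1)

/-- Jacobian matrix `(∇u)_{ij} = ∂_j u_i` of a vector field. -/
def gradV (u : Vec3 → Vec3) (x : Vec3) : Fin 3 → Fin 3 → ℝ :=
  fun i j => fderiv ℝ (fun y => u y i) x (Pi.single j 1)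

/-- Divergence of a vector field. -/
def div3 (u : Vec3 → Vec3) (x : Vec3) : ℝ := ∑ i, gradV u x i i

/-- Row-wise divergence of a matrix field: `(div A)_i = ∑_j ∂_j A_{ij}`. -/
def divMat (A : Vec3 → Fin 3 → Fin 3 → ℝ) (x : Vec3) : Vec3 :=
  fun i => ∑ j, fderiv ℝ (fun y => A y i j) x (Pi.single j 1)

/-- Symmetric part `𝔻u` of the Jacobian. -/
def Dsym (u : Vec3 → Vec3) (x : Vec3) : Fin 3 → Fin 3 → ℝ :=
  fun i j => (gradV u x i j + gradV u x j i) / 2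

/-- Skew-symmetric part `𝔸u` of the Jacobian. -/
def Askew (u : Vec3 → Vec3) (x : Vec3) : Fin 3 → Fin 3 → ℝ :=
  fun i j => (gradV u x i j - gradV u x j i) / 2

/-- `curl W = ∇ × W` in three dimensions. -/
def curl3 (u : Vec3 → Vec3) (x : Vec3) : Vec3 :=
  ![gradV u x 2 1 - gradV u x 1 2,
    gradV u x 0 2 - gradV u x 2 0,
    gradV u x 1 0 - gradV u x 0 1]

/-- Cross product in `ℝ³`. -/
def cross3 (a b : Vec3) : Vec3 :=
  ![a 1 * b 2 - a 2 * b 1, a 2 * b 0 - a 0 * b 2, a 0 * b 1 - a 1 * b 0]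

/-- The pressure `p(ϱ) = ϱ^γ/γ - ϱ^{-κ}/κ`. -/
def press (γ κ ϱ : ℝ) : ℝ := ϱ ^ γ / γ - ϱ ^ (-κ) / κ

/-- The pressure potential `H(ϱ) = ϱ ∫₁^ϱ p(z) z^{-2} dz`. -/
def Hpot (γ κ ϱ : ℝ) : ℝ := ϱ * ∫ z in (1:ℝ)..ϱ, press γ κ z / z ^ 2

/-- The relative pressure potential `H(ϱ;b) = H(ϱ) - H(b) - H'(b)(ϱ-b)`. -/
def Hrel (γ κ ϱ b : ℝ) : ℝ := Hpot γ κ ϱ - Hpot γ κ b - deriv (Hpot γ κ) b * (ϱ - b)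

/-- `Π(ϱ;b) = p(ϱ) - p(b) - p'(b)(ϱ-b)`. -/
def PiRel (γ κ ϱ b : ℝ) : ℝ := press γ κ ϱ - press γ κ b - deriv (press γ κ) b * (ϱ - b)

/-- The classical relative energy `E(ϱ,u | b)`. -/
def energyE (γ κ ε : ℝ) (b ϱ : Vec3 → ℝ) (u : Vec3 → Vec3) : ℝ :=
  (1/2) * ∫ x, ϱ x * sq3 (u x) ∂μΩ + (1/ε^2) * ∫ x, Hrel γ κ (ϱ x) (b x) ∂μΩ

/-- The BD entropy functional `F(ϱ,u | b)`. -/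
def energyF (ν : ℝ) (b ϱ : Vec3 → ℝ) (u : Vec3 → Vec3) : ℝ :=
  ∫ x, ϱ x * sq3 (fun i => u x i + ν * grad (fun y => Real.log (ϱ y / b y)) x i) ∂μΩ

/-- Real Lᵖ norm (on the torus) of a scalar function. -/
def LpN (p : ℝ) (f : Vec3 → ℝ) : ℝ := (∫ x, |f x| ^ p ∂μΩ) ^ (1/p)

/-- Real Lᵖ norm (on the torus) of a vector field. -/
def LpNV (p : ℝ) (f : Vec3 → Vec3) : ℝ := (∫ x, Real.sqrt (sq3 (f x)) ^ p ∂μΩ) ^ (1/p)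

/-- Real Lᵖ norm (on the torus) of a matrix field. -/
def LpNM (p : ℝ) (A : Vec3 → Fin 3 → Fin 3 → ℝ) : ℝ :=
  (∫ x, Real.sqrt (mdot3 (A x) (A x)) ^ p ∂μΩ) ^ (1/p)

/-- The static profile `b`, solving `∇p(b) = b ∇G`, with the force `G`. -/
structure StaticProfile (γ κ : ℝ) where
  G : Vec3 → ℝ
  b : Vec3 → ℝ
  bLow : ℝ
  bHigh : ℝ
  hG : ContDiff ℝ 3 G
  hb : ContDiff ℝ 3 b
  hGper : isPeriodic G
  hbper : isPeriodic b
  hlow : 0 < bLow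
  hbounds : ∀ x, bLow ≤ b x ∧ b x ≤ bHigh
  hstatic : ∀ x, grad (fun y => press γ κ (b y)) x = fun i => b x * grad G x i

/-- Scalar test functions on `[0,T) × 𝕋³`. -/
structure IsTest (T : ℝ) (ξ : ℝ → Vec3 → ℝ) : Prop where
  smooth : ContDiff ℝ (⊤ : ℕ∞) (fun p : ℝ × Vec3 => ξ p.1 p.2)
  per : ∀ t, isPeriodic (ξ t)
  supp : ∃ T' < T, ∀ t x, T' ≤ t → ξ t x = 0

/-- Vector-valued test functions on `[0,T) × 𝕋³`. -/
structure IsTestV (T : ℝ) (ψ : ℝ → Vec3 → Vec3) : Prop where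
  smooth : ContDiff ℝ (⊤ : ℕ∞) (fun p : ℝ × Vec3 => ψ p.1 p.2)
  per : ∀ t, isPeriodic (ψ t)
  supp : ∃ T' < T, ∀ t x, T' ≤ t → ψ t x = 0

/-- Vector-valued test functions on `𝕋³`. -/
structure IsTestS (ψ : Vec3 → Vec3) : Prop where
  smooth : ContDiff ℝ (⊤ : ℕ∞) ψ
  per : isPeriodic ψ

/-- Time derivative of a time-dependent scalar field. -/
def dt (ξ : ℝ → Vec3 → ℝ) (t : ℝ) (x : Vec3) : ℝ := deriv (fun s => ξ s x) t

/-- Time derivative of a time-dependent vector field. -/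
def dtV (ψ : ℝ → Vec3 → Vec3) (t : ℝ) (x : Vec3) : Vec3 := fun i => deriv (fun s => ψ s x i) t

/-- A global-in-time finite energy weak solution of the scaled system (NSε),
with BD entropy constant `C0`. -/
structure FEWeakSol (γ κ ν ε C0 : ℝ) (P : StaticProfile γ κ)
    (ϱ0 : Vec3 → ℝ) (u0 : Vec3 → Vec3)
    (ϱ : ℝ → Vec3 → ℝ) (u : ℝ → Vec3 → Vec3) : Prop where
  nonneg : ∀ t x, 0 ≤ ϱ t x
  per_ϱ : ∀ t, isPeriodic (ϱ t)
  per_u : ∀ t, isPeriodic (u t)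
  bd_ϱ : ∃ C, ∀ t, 0 ≤ t → ∫ x, (ϱ t x) ^ γ ∂μΩ ≤ C
  bd_ϱinv : ∃ C, ∀ t, 0 ≤ t → ∫ x, (ϱ t x) ^ (-κ) ∂μΩ ≤ C
  bd_gradsqrt : ∃ C, ∀ t, 0 ≤ t →
    ∫ x, sq3 (grad (fun y => Real.sqrt (ϱ t y)) x) ∂μΩ ≤ C
  bd_pgrad : ∀ T > 0, ∃ C, ∫ t in Set.Ioc (0:ℝ) T,
    (∫ x, (deriv (press γ κ) (ϱ t x) / ϱ t x) * sq3 (grad (ϱ t) x) ∂μΩ) ≤ C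
  bd_ϱu : ∃ C, ∀ t, 0 ≤ t → ∫ x, ϱ t x * sq3 (u t x) ∂μΩ ≤ C
  bd_ϱgradu : ∀ T > 0, ∃ C, ∫ t in Set.Ioc (0:ℝ) T,
    (∫ x, ϱ t x * mdot3 (gradV (u t) x) (gradV (u t) x) ∂μΩ) ≤ C
  weak_mass : ∀ T > 0, ∀ ξ : ℝ → Vec3 → ℝ, IsTest T ξ →
    (∫ x, ϱ0 x * ξ 0 x ∂μΩ)
      + ∫ t in Set.Ioi (0:ℝ),
          (∫ x, (ϱ t x * dt ξ t x + ϱ t x * dot3 (u t x) (grad (ξ t) x)) ∂μΩ) = 0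
  weak_mom : ∀ T > 0, ∀ ψ : ℝ → Vec3 → Vec3, IsTestV T ψ →
    (∫ x, ϱ0 x * dot3 (u0 x) (ψ 0 x) ∂μΩ)
      + ∫ t in Set.Ioi (0:ℝ),
          (∫ x,
            (ϱ t x * dot3 (u t x) (dtV ψ t x)
              + mdot3 (fun i j => ϱ t x * u t x i * u t x j) (gradV (ψ t) x)
              + (1/ε^2) * press γ κ (ϱ t x) * div3 (ψ t) x
              + (1/ε^2) * ϱ t x * dot3 (grad P.G x) (ψ t x)
              - ν * mdot3 (fun i j => ϱ t x * Dsym (u t) x i j) (gradV (ψ t) x)) ∂μΩ) = 0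
  energy_ineq : ∀ᵐ t ∂(volume.restrict (Set.Ioi (0:ℝ))),
    energyE γ κ ε P.b (ϱ t) (u t)
      + ν * ∫ s in Set.Ioc (0:ℝ) t,
          (∫ x, ϱ s x * mdot3 (Dsym (u s) x) (Dsym (u s) x) ∂μΩ)
      ≤ energyE γ κ ε P.b ϱ0 u0
  bd_entropy : ∀ᵐ t ∂(volume.restrict (Set.Ioi (0:ℝ))),
    energyF ν P.b (ϱ t) (u t)
      + (ν/ε^2) * ∫ s in Set.Ioc (0:ℝ) t,
          (∫ x, (P.b x)^2 * (deriv (press γ κ) (ϱ s x) / ϱ s x)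
              * sq3 (grad (fun y => ϱ s y / P.b y) x) ∂μΩ)
      + ν * ∫ s in Set.Ioc (0:ℝ) t,
          (∫ x, ϱ s x * mdot3 (Askew (u s) x) (Askew (u s) x) ∂μΩ)
      ≤ C0 * Real.exp (C0 * (1 + t))

/-- A family (indexed by `ε ∈ (0,1]`) of ill-prepared initial data,
with uniformly bounded energy and BD entropy. -/
structure IllPreparedFamily (γ κ ν : ℝ) (P : StaticProfile γ κ)
    (ϱ0 : ℝ → Vec3 → ℝ) (u0 : ℝ → Vec3 → Vec3) (φ0 : ℝ → Vec3 → ℝ) : Prop where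
  decomp : ∀ ε ∈ Set.Ioc (0:ℝ) 1, ∀ x, ϱ0 ε x = P.b x + ε * φ0 ε x
  bd_φ0 : ∃ C, ∀ ε ∈ Set.Ioc (0:ℝ) 1, ∀ x, |φ0 ε x| ≤ C
  bd_gradlog : ∃ C, ∀ ε ∈ Set.Ioc (0:ℝ) 1, ∀ x,
    Real.sqrt (sq3 (grad (fun y => Real.log (ϱ0 ε y / P.b y)) x)) ≤ C
  bd_u0 : ∃ C, ∀ ε ∈ Set.Ioc (0:ℝ) 1, ∀ x i, |u0 ε x i| ≤ C
  bd_energy : ∃ C, ∀ ε ∈ Set.Ioc (0:ℝ) 1,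
    energyE γ κ ε P.b (ϱ0 ε) (u0 ε) + energyF ν P.b (ϱ0 ε) (u0 ε) ≤ C

/-- The essential set `{ b_*/2 ≤ ϱ ≤ 2 b^* }`. -/
def essSet (bLow bHigh : ℝ) (ρ : Vec3 → ℝ) : Set Vec3 :=
  {x | bLow / 2 ≤ ρ x ∧ ρ x ≤ 2 * bHigh}

/-- `k`-th Fourier coefficient of a (periodic) function on the torus. -/
def fourierCoef (f : Vec3 → ℝ) (k : Fin 3 → ℤ) : ℂ :=
  ∫ y in cube, (f y : ℂ)
      * Complex.exp (-(2 * (Real.pi : ℂ) * Complex.I) * (∑ i, (k i : ℂ) * (y i : ℂ)))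

/-- Symbol of the low-frequency cut-off `S_M = Id on k = 0 plus Σ_{j ≤ M-1} φ(2^{-j}|k|)`. -/
def smSymbol (φLP : ℝ → ℝ) (M : ℕ) (k : Fin 3 → ℤ) : ℝ :=
  if k = 0 then 1
  else ∑' j : ℤ, if j ≤ (M : ℤ) - 1
    then φLP ((2:ℝ) ^ (-j) * Real.sqrt (∑ i, ((k i : ℝ))^2)) else 0

/-- The low-frequency Littlewood–Paley cut-off operator `S_M` on the torus. -/
def SM (φLP : ℝ → ℝ) (M : ℕ) (f : Vec3 → ℝ) (x : Vec3) : ℝ :=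
  (∑' k : Fin 3 → ℤ, ((smSymbol φLP M k : ℝ) : ℂ) * fourierCoef f k
      * Complex.exp ((2 * (Real.pi : ℂ) * Complex.I) * (∑ i, (k i : ℂ) * (x i : ℂ)))).re

/-- `S_M` applied componentwise to a vector field. -/
def SMV (φLP : ℝ → ℝ) (M : ℕ) (f : Vec3 → Vec3) (x : Vec3) : Vec3 :=
  fun i => SM φLP M (fun y => f y i) x

/-- A Littlewood–Paley partition-of-unity generating function. -/
structure IsLPFunction (φLP : ℝ → ℝ) : Prop where
  smooth : ContDiff ℝ (⊤ : ℕ∞) φLP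
  even : ∀ r, φLP (-r) = φLP r
  range : ∀ r, 0 ≤ φLP r ∧ φLP r ≤ 1
  support : ∀ r, φLP r ≠ 0 → 5/6 ≤ |r| ∧ |r| ≤ 12/5
  partition : ∀ r : ℝ, r ≠ 0 → ∑' j : ℤ, φLP ((2:ℝ) ^ (-j) * r) = 1

end


noncomputable section
namespace SPaux
open Filter Set

def cst (γ κ : ℝ) : ℝ := 1/(γ*(γ-1)) + 1/(κ*(κ+1))
def Hf (γ κ : ℝ) (x : ℝ) : ℝ := x^(γ-1)/(γ-1) - x^(-κ-1)/(κ+1) - cst γ κ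
def Hg (γ κ : ℝ) (x : ℝ) : ℝ := x^(γ-2) + x^(-κ-2)
def Fa (γ κ z : ℝ) : ℝ := z^(γ-1)/(γ*(γ-1)) + z^(-κ-1)/(κ*(κ+1))

variable {γ κ : ℝ}

theorem Hg_pos {x : ℝ} (hx : 0 < x) : 0 < Hg γ κ x :=
  add_pos (Real.rpow_pos_of_pos hx _) (Real.rpow_pos_of_pos hx _)

theorem hasDerivAt_Hf (hγ : 1 < γ) (hκ : 0 < κ) {x : ℝ} (hx : 0 < x) :
    HasDerivAt (Hf γ κ) (Hg γ κ x) x := by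
  have hγ1 : γ - 1 ≠ 0 := by linarith
  have hκ1 : κ + 1 ≠ 0 := by linarith
  have h1 : HasDerivAt (fun x : ℝ => x ^ (γ-1)) ((γ-1) * x ^ (γ-1-1)) x :=
    Real.hasDerivAt_rpow_const (Or.inl hx.ne')
  have h2 : HasDerivAt (fun x : ℝ => x ^ (-κ-1)) ((-κ-1) * x ^ (-κ-1-1)) x :=
    Real.hasDerivAt_rpow_const (Or.inl hx.ne')
  have h := ((h1.div_const (γ-1)).sub (h2.div_const (κ+1))).sub_const (cst γ κ)
  have e1 : γ - 1 - 1 = γ - 2 := by ring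
  have e2 : -κ - 1 - 1 = -κ - 2 := by ring
  rw [e1, e2] at h
  refine h.congr_deriv ?_
  unfold Hg
  field_simp
  ring

theorem hasDerivAt_press (hγ : 1 < γ) (hκ : 0 < κ) {z : ℝ} (hz : 0 < z) :
    HasDerivAt (press γ κ) (z^(γ-1) + z^(-κ-1)) z := by
  have h1 : HasDerivAt (fun x : ℝ => x ^ γ) (γ * z ^ (γ-1)) z :=
    Real.hasDerivAt_rpow_const (Or.inl hz.ne')
  have h2 : HasDerivAt (fun x : ℝ => x ^ (-κ)) ((-κ) * z ^ (-κ-1)) z :=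
    Real.hasDerivAt_rpow_const (Or.inl hz.ne')
  have h := (h1.div_const γ).sub (h2.div_const κ)
  refine h.congr_deriv ?_
  field_simp
  ring

theorem hasDerivAt_Fa (hγ : 1 < γ) (hκ : 0 < κ) {z : ℝ} (hz : 0 < z) :
    HasDerivAt (Fa γ κ) (press γ κ z / z ^ 2) z := by
  have hγ1 : γ - 1 ≠ 0 := by linarith
  have hκ1 : κ + 1 ≠ 0 := by linarith
  have hγ0 : γ ≠ 0 := by linarith
  have hκ0 : κ ≠ 0 := by linarith
  have h1 : HasDerivAt (fun x : ℝ => x ^ (γ-1)) ((γ-1) * z ^ (γ-1-1)) z :=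
    Real.hasDerivAt_rpow_const (Or.inl hz.ne')
  have h2 : HasDerivAt (fun x : ℝ => x ^ (-κ-1)) ((-κ-1) * z ^ (-κ-1-1)) z :=
    Real.hasDerivAt_rpow_const (Or.inl hz.ne')
  have h := (h1.div_const (γ*(γ-1))).add (h2.div_const (κ*(κ+1)))
  have e1 : γ - 1 - 1 = γ - 2 := by ring
  have e2 : -κ - 1 - 1 = -κ - 2 := by ring
  rw [e1, e2] at h
  refine h.congr_deriv ?_
  have hz2 : (z:ℝ) ^ (2:ℕ) = z ^ (2:ℝ) := by
    rw [← Real.rpow_natCast z 2]; norm_num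
  have g1 : z ^ (γ-2) = z ^ γ / z ^ (2:ℝ) := Real.rpow_sub hz γ 2
  have g2 : z ^ (-κ-2) = z ^ (-κ) / z ^ (2:ℝ) := Real.rpow_sub hz (-κ) 2
  have hz2pos : (0:ℝ) < z ^ (2:ℝ) := Real.rpow_pos_of_pos hz _
  rw [press, hz2, g1, g2]
  field_simp
  ring

theorem rpow_split {ϱ : ℝ} (hϱ : 0 < ϱ) (p : ℝ) : ϱ ^ p = ϱ * ϱ ^ (p - 1) := by
  calc ϱ ^ p = ϱ ^ (1 + (p-1)) := by norm_num
  _ = ϱ ^ (1:ℝ) * ϱ ^ (p-1) := Real.rpow_add hϱ 1 (p-1)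
  _ = ϱ * ϱ ^ (p-1) := by rw [Real.rpow_one]

theorem Hpot_eq (hγ : 1 < γ) (hκ : 0 < κ) {ϱ : ℝ} (hϱ : 0 < ϱ) :
    Hpot γ κ ϱ = ϱ^γ/(γ*(γ-1)) + ϱ^(-κ)/(κ*(κ+1)) - cst γ κ * ϱ := by
  have hmin : (0:ℝ) < min 1 ϱ := lt_min one_pos hϱ
  have hpos : ∀ z ∈ Set.uIcc (1:ℝ) ϱ, 0 < z := by
    intro z hz
    rw [Set.uIcc, Set.mem_Icc] at hz
    exact lt_of_lt_of_le hmin hz.1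
  have hderiv : ∀ z ∈ Set.uIcc (1:ℝ) ϱ, HasDerivAt (Fa γ κ) (press γ κ z / z ^ 2) z :=
    fun z hz => hasDerivAt_Fa hγ hκ (hpos z hz)
  have hcont : ContinuousOn (fun z : ℝ => press γ κ z / z ^ 2) (Set.uIcc 1 ϱ) := by
    intro z hz
    have hz0 := hpos z hz
    have c1 : ContinuousAt (fun x : ℝ => x ^ γ) z :=
      Real.continuousAt_rpow_const z γ (Or.inl hz0.ne')
    have c2 : ContinuousAt (fun x : ℝ => x ^ (-κ)) z :=
      Real.continuousAt_rpow_const z (-κ) (Or.inl hz0.ne')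
    exact (((c1.div_const γ).sub (c2.div_const κ)).div
      ((continuous_pow 2).continuousAt) (pow_ne_zero 2 hz0.ne')).continuousWithinAt
  have hint := hcont.intervalIntegrable (μ := MeasureTheory.volume)
  have key := intervalIntegral.integral_eq_sub_of_hasDerivAt hderiv hint
  unfold Hpot
  rw [key]
  unfold Fa cst
  rw [Real.one_rpow, Real.one_rpow, rpow_split hϱ γ, rpow_split hϱ (-κ)]
  ring_nf

theorem deriv_Hpot (hγ : 1 < γ) (hκ : 0 < κ) {ϱ : ℝ} (hϱ : 0 < ϱ) :
    deriv (Hpot γ κ) ϱ = Hf γ κ ϱ := by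
  have hγ1 : γ - 1 ≠ 0 := by linarith
  have hκ1 : κ + 1 ≠ 0 := by linarith
  have hγ0 : γ ≠ 0 := by linarith
  have hκ0 : κ ≠ 0 := by linarith
  have hev : Hpot γ κ =ᶠ[nhds ϱ]
      (fun x => x^γ/(γ*(γ-1)) + x^(-κ)/(κ*(κ+1)) - cst γ κ * x) := by
    filter_upwards [isOpen_Ioi.mem_nhds hϱ] with x hx
    exact Hpot_eq hγ hκ hx
  have h1 : HasDerivAt (fun x : ℝ => x ^ γ) (γ * ϱ ^ (γ-1)) ϱ :=
    Real.hasDerivAt_rpow_const (Or.inl hϱ.ne')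
  have h2 : HasDerivAt (fun x : ℝ => x ^ (-κ)) ((-κ) * ϱ ^ (-κ-1)) ϱ :=
    Real.hasDerivAt_rpow_const (Or.inl hϱ.ne')
  have h3 : HasDerivAt (fun x : ℝ => cst γ κ * x) (cst γ κ) ϱ := by
    simpa using (hasDerivAt_id ϱ).const_mul (cst γ κ)
  have hA : HasDerivAt
      (fun x : ℝ => x^γ/(γ*(γ-1)) + x^(-κ)/(κ*(κ+1)) - cst γ κ * x) (Hf γ κ ϱ) ϱ := by
    have h := ((h1.div_const (γ*(γ-1))).add (h2.div_const (κ*(κ+1)))).sub h3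
    refine h.congr_deriv ?_
    unfold Hf
    field_simp
    ring
  exact (hA.congr_of_eventuallyEq hev).deriv

theorem Hf_mono (hγ : 1 < γ) (hκ : 0 < κ) : StrictMonoOn (Hf γ κ) (Set.Ioi 0) := by
  apply strictMonoOn_of_deriv_pos (convex_Ioi 0)
  · intro x hx
    exact (hasDerivAt_Hf hγ hκ hx).continuousAt.continuousWithinAt
  · intro x hx
    rw [interior_Ioi] at hx
    rw [(hasDerivAt_Hf hγ hκ hx).deriv]
    exact Hg_pos hx

theorem Hf_tendsto_atTop (hγ : 1 < γ) (hκ : 0 < κ) :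
    Tendsto (Hf γ κ) atTop atTop := by
  have t1 : Tendsto (fun x : ℝ => x ^ (γ-1) / (γ-1)) atTop atTop :=
    (tendsto_rpow_atTop (by linarith)).atTop_div_const (by linarith)
  have t2 : Tendsto (fun x : ℝ => x ^ (-κ-1)) atTop (nhds 0) := by
    have := tendsto_rpow_neg_atTop (y := κ + 1) (by linarith)
    convert this using 2 with x
    congr 1; ring
  have t3 : Tendsto (fun x : ℝ => -(x ^ (-κ-1) / (κ+1)) - cst γ κ) atTop
      (nhds (-(0 / (κ+1)) - cst γ κ)) :=
    ((t2.div_const (κ+1)).neg).sub_const _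
  have := t1.atTop_add t3
  refine this.congr fun x => ?_
  unfold Hf; ring

theorem Hf_tendsto_atBot (hγ : 1 < γ) (hκ : 0 < κ) :
    Tendsto (Hf γ κ) (nhdsWithin 0 (Set.Ioi 0)) atBot := by
  have h1 : Tendsto (fun x : ℝ => x ^ (κ+1)) (nhdsWithin 0 (Set.Ioi 0))
      (nhdsWithin 0 (Set.Ioi 0)) := by
    rw [tendsto_nhdsWithin_iff]
    constructor
    · have hc : ContinuousAt (fun x : ℝ => x ^ (κ+1)) 0 :=
        Real.continuousAt_rpow_const 0 (κ+1) (Or.inr (by linarith))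
      have h0 : (0:ℝ) ^ (κ+1) = 0 := Real.zero_rpow (by linarith)
      simpa [h0] using (hc.tendsto.mono_left nhdsWithin_le_nhds)
    · filter_upwards [self_mem_nhdsWithin] with x hx
      exact Real.rpow_pos_of_pos hx _
  have h2 : Tendsto (fun x : ℝ => x ^ (-κ-1)) (nhdsWithin 0 (Set.Ioi 0)) atTop := by
    have := tendsto_inv_nhdsGT_zero.comp h1
    refine this.congr' ?_
    filter_upwards [self_mem_nhdsWithin] with x hx
    simp only [Function.comp]
    rw [← Real.rpow_neg (le_of_lt hx)]
    congr 1; ring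
  have h3 : Tendsto (fun x : ℝ => x ^ (γ-1) / (γ-1) - cst γ κ)
      (nhdsWithin 0 (Set.Ioi 0)) (nhds ((0:ℝ)^(γ-1) / (γ-1) - cst γ κ)) := by
    have hc : ContinuousAt (fun x : ℝ => x ^ (γ-1)) 0 :=
      Real.continuousAt_rpow_const 0 (γ-1) (Or.inr (by linarith))
    exact ((hc.tendsto.mono_left nhdsWithin_le_nhds).div_const _).sub_const _
  have h4 : Tendsto (fun x : ℝ => -(x ^ (-κ-1) / (κ+1)))
      (nhdsWithin 0 (Set.Ioi 0)) atBot := by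
    have := (h2.atTop_div_const (show (0:ℝ) < κ + 1 by linarith))
    exact tendsto_neg_atTop_atBot.comp this
  have := h3.add_atBot h4
  refine this.congr fun x => ?_
  unfold Hf; ring

theorem Hf_surj (hγ : 1 < γ) (hκ : 0 < κ) (y : ℝ) :
    ∃ x, 0 < x ∧ Hf γ κ x = y := by
  obtain ⟨a, hay, ha0⟩ :=
    (((Hf_tendsto_atBot hγ hκ).eventually (eventually_lt_atBot y)).and
      self_mem_nhdsWithin).exists
  obtain ⟨B, hBa, hBy⟩ :=
    ((eventually_ge_atTop a).and ((Hf_tendsto_atTop hγ hκ).eventually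
      (eventually_gt_atTop y))).exists
  have hcont : ContinuousOn (Hf γ κ) (Set.Icc a B) := by
    intro z hz
    have hz0 : 0 < z := lt_of_lt_of_le ha0 hz.1
    exact (hasDerivAt_Hf hγ hκ hz0).continuousAt.continuousWithinAt
  have : y ∈ Set.Icc (Hf γ κ a) (Hf γ κ B) := ⟨le_of_lt hay, le_of_lt hBy⟩
  obtain ⟨x, hx, hxy⟩ := intermediate_value_Icc hBa hcont this
  exact ⟨x, lt_of_lt_of_le ha0 hx.1, hxy⟩

theorem contDiffAt_Hf (hγ : 1 < γ) (hκ : 0 < κ) {n : WithTop ℕ∞} {x : ℝ} (hx : 0 < x) :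
    ContDiffAt ℝ n (Hf γ κ) x := by
  have c1 : ContDiffAt ℝ n (fun x : ℝ => x ^ (γ-1)) x :=
    Real.contDiffAt_rpow_const_of_ne hx.ne'
  have c2 : ContDiffAt ℝ n (fun x : ℝ => x ^ (-κ-1)) x :=
    Real.contDiffAt_rpow_const_of_ne hx.ne'
  exact ((c1.div_const _).sub (c2.div_const _)).sub contDiffAt_const

theorem invf_contDiffAt (hγ : 1 < γ) (hκ : 0 < κ) {invf : ℝ → ℝ}
    (hpos : ∀ y, 0 < invf y) (hinv : ∀ y, Hf γ κ (invf y) = y)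
    {n : WithTop ℕ∞} (hn : 1 ≤ n) (y : ℝ) : ContDiffAt ℝ n invf y := by
  set a := invf y with ha
  have hapos : 0 < a := hpos y
  have hfa : Hf γ κ a = y := hinv y
  have hCD : ContDiffAt ℝ n (Hf γ κ) a := contDiffAt_Hf hγ hκ hapos
  have hder : HasDerivAt (Hf γ κ) (Hg γ κ a) a := hasDerivAt_Hf hγ hκ hapos
  have hne : Hg γ κ a ≠ 0 := (Hg_pos hapos).ne'
  have hFD := hder.hasFDerivAt_equiv hne
  have hn0 : n ≠ 0 := (lt_of_lt_of_le zero_lt_one hn).ne'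
  have hL : ContDiffAt ℝ n (hCD.localInverse hFD hn0) (Hf γ κ a) :=
    hCD.to_localInverse hFD hn0
  set L := hCD.localInverse hFD hn0 with hLdef
  have hS : HasStrictFDerivAt (Hf γ κ)
      (↑(ContinuousLinearEquiv.unitsEquivAut ℝ (Units.mk0 (Hg γ κ a) hne)) : ℝ →L[ℝ] ℝ) a :=
    hCD.hasStrictFDerivAt' hFD hn0
  have hri : ∀ᶠ z in nhds (Hf γ κ a), Hf γ κ (L z) = z := hS.eventually_right_inverse
  have hLy : L (Hf γ κ a) = a := hCD.localInverse_apply_image hFD hn0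
  have hLcont : ContinuousAt L (Hf γ κ a) := hL.continuousAt
  have hmem : ∀ᶠ z in nhds (Hf γ κ a), L z ∈ Set.Ioi (0:ℝ) :=
    hLcont.eventually_mem (isOpen_Ioi.mem_nhds (by rw [hLy]; exact hapos))
  have heq : invf =ᶠ[nhds y] L := by
    rw [← hfa]
    filter_upwards [hri, hmem] with z h1 h2
    exact (Hf_mono hγ hκ).injOn (hpos z) h2 (by rw [hinv z, h1])
  exact (hfa ▸ hL).congr_of_eventuallyEq heq

end SPaux
end

/-- Existence and bounds of the static profile. -/
theorem static_profile_existence (γ κ : ℝ) (hγ : 1 < γ) (hκ : 0 < κ) :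
    StrictMonoOn (deriv (Hpot γ κ)) (Set.Ioi 0)
    ∧ (∀ y : ℝ, ∃! ϱ : ℝ, ϱ ∈ Set.Ioi (0:ℝ) ∧ deriv (Hpot γ κ) ϱ = y)
    ∧ ∀ G : Vec3 → ℝ, isPeriodic G → ContDiff ℝ 1 G →
        ∃ b : Vec3 → ℝ,
          (∀ x, 0 < b x ∧ deriv (Hpot γ κ) (b x) = G x)
          ∧ isPeriodic b
          ∧ ContDiff ℝ 1 b
          ∧ (ContDiff ℝ 3 G → ContDiff ℝ 3 b)
          ∧ (∃ bLow bHigh : ℝ, 0 < bLow ∧ bLow ≤ bHigh ∧ ∀ x, bLow ≤ b x ∧ b x ≤ bHigh)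
          ∧ ∀ x, grad (fun y => press γ κ (b y)) x = fun i => b x * grad G x i := by
  have hsurj := SPaux.Hf_surj hγ hκ
  choose invf hpos hinv using hsurj
  have hmono := SPaux.Hf_mono (γ := γ) (κ := κ) hγ hκ
  refine ⟨?_, ?_, ?_⟩
  · intro a ha b hb hab
    rw [SPaux.deriv_Hpot hγ hκ ha, SPaux.deriv_Hpot hγ hκ hb]
    exact hmono ha hb hab
  · intro y
    refine ⟨invf y, ⟨hpos y, ?_⟩, ?_⟩
    · rw [SPaux.deriv_Hpot hγ hκ (hpos y)]; exact hinv y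
    · rintro z ⟨hz, hzy⟩
      rw [SPaux.deriv_Hpot hγ hκ hz] at hzy
      exact hmono.injOn hz (hpos y) (by rw [hzy, hinv y])
  · intro G hGper hG1
    have hb1 : ContDiff ℝ 1 (fun x : Vec3 => invf (G x)) :=
      contDiff_iff_contDiffAt.mpr fun x =>
        (SPaux.invf_contDiffAt hγ hκ hpos hinv le_rfl (G x)).comp x hG1.contDiffAt
    refine ⟨fun x => invf (G x), ?_, ?_, hb1, ?_, ?_, ?_⟩
    · intro x
      refine ⟨hpos _, ?_⟩
      rw [SPaux.deriv_Hpot hγ hκ (hpos _)]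
      exact hinv _
    · intro x k
      simp only
      rw [hGper x k]
    · intro hG3
      exact contDiff_iff_contDiffAt.mpr fun x =>
        (SPaux.invf_contDiffAt hγ hκ hpos hinv (by norm_num) (G x)).comp x hG3.contDiffAt
    · -- bounds
      have hGc : Continuous G := hG1.continuous
      have hcube : IsCompact cube := isCompact_Icc
      have hne : cube.Nonempty := ⟨0, Set.mem_Icc.mpr ⟨le_refl _, zero_le_one⟩⟩
      obtain ⟨xm, hxmc, hxm⟩ := hcube.exists_isMinOn hne hGc.continuousOn
      obtain ⟨xM, hxMc, hxM⟩ := hcube.exists_isMaxOn hne hGc.continuousOn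
      have hrange : ∀ x : Vec3, G xm ≤ G x ∧ G x ≤ G xM := by
        intro x
        have hfr : (fun i => Int.fract (x i)) ∈ cube := by
          rw [cube, Set.mem_Icc]
          constructor
          · intro i; exact Int.fract_nonneg _
          · intro i; exact (Int.fract_lt_one _).le
        have hx : G x = G (fun i => Int.fract (x i)) := by
          have h := hGper (fun i => Int.fract (x i)) (fun i => ⌊x i⌋)
          rw [← h]
          congr 1
          funext i
          show x i = Int.fract (x i) + (⌊x i⌋ : ℝ)
          rw [Int.fract_add_floor]
        exact ⟨hx ▸ isMinOn_iff.mp hxm _ hfr, hx ▸ isMaxOn_iff.mp hxM _ hfr⟩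
      have hle : ∀ {u v : ℝ}, u ≤ v → invf u ≤ invf v := by
        intro u v huv
        exact (hmono.le_iff_le (hpos u) (hpos v)).mp
          (by rw [hinv u, hinv v]; exact huv)
      exact ⟨invf (G xm), invf (G xM), hpos _, hle (isMinOn_iff.mp hxm _ hxMc),
        fun x => ⟨hle (hrange x).1, hle (hrange x).2⟩⟩
    · -- static equation
      intro x
      set c := invf (G x) with hc
      have hcpos : 0 < c := hpos _
      have hDb := ((hb1.differentiable one_ne_zero) x).hasFDerivAt
      have hcomp :
          HasFDerivAt (fun y => press γ κ (invf (G y)))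
            ((c^(γ-1) + c^(-κ-1)) • fderiv ℝ (fun y : Vec3 => invf (G y)) x) x :=
        by have := (SPaux.hasDerivAt_press hγ hκ hcpos).comp_hasFDerivAt x hDb; exact this
      have hGF :
          HasFDerivAt G (SPaux.Hg γ κ c • fderiv ℝ (fun y : Vec3 => invf (G y)) x) x :=
        by
          have := (SPaux.hasDerivAt_Hf hγ hκ hcpos).comp_hasFDerivAt x hDb
          exact HasFDerivAt.congr_of_eventuallyEq
            this
            (Filter.Eventually.of_forall fun y => (hinv (G y)).symm)
      funext i
      show fderiv ℝ (fun y => press γ κ (invf (G y))) x (Pi.single i 1)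
          = invf (G x) * fderiv ℝ G x (Pi.single i 1)
      rw [hcomp.fderiv, hGF.fderiv]
      simp only [ContinuousLinearMap.coe_smul', Pi.smul_apply, smul_eq_mul]
      have e1 : c ^ (γ-1) = c * c ^ (γ-2) := by
        rw [SPaux.rpow_split hcpos (γ-1)]
        congr 2
        ring
      have e2 : c ^ (-κ-1) = c * c ^ (-κ-2) := by
        rw [SPaux.rpow_split hcpos (-κ-1)]
        congr 2
        ring
      rw [e1, e2]
      unfold SPaux.Hg
      ring
end

section
/- Coercivity of the relative pressure potential on the residual range. Let γ > 1, κ > 0 and 0 < b_* ≤ b^*. There exists a constant c > 0, depending only on γ, κ, b_*, b^*, such that for every b ∈ [b_*, b^*] and every ϱ > 0 with ϱ ∉ [b_*/2, 2b^*], one has H(ϱ) − H(b) − H'(b)(ϱ − b) ≥ c (ϱ^γ + ϱ^{−κ} + 1). -/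
open MeasureTheory Filter

section
lemma Hpot_eq {γ κ : ℝ} (hγ : 1 < γ) (hκ : 0 < κ) {ϱ : ℝ} (hϱ : 0 < ϱ) :
    Hpot γ κ ϱ = ϱ^γ/(γ*(γ-1)) + ϱ^(-κ)/(κ*(κ+1))
      - (1/(γ*(γ-1)) + 1/(κ*(κ+1)))*ϱ := by
  have hγ0 : (0:ℝ) < γ := by linarith
  have hκ1 : (0:ℝ) < κ + 1 := by linarith
  have h0 : (0:ℝ) ∉ Set.uIcc 1 ϱ := by
    simp only [Set.mem_uIcc]
    push_neg
    constructor <;> intro h <;> [linarith; nlinarith]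
  have hcong : (∫ z in (1:ℝ)..ϱ, press γ κ z / z ^ 2)
      = ∫ z in (1:ℝ)..ϱ, (z^(γ-2)/γ - z^(-κ-2)/κ) := by
    apply intervalIntegral.integral_congr
    intro z hz
    have hz0 : 0 < z := by
      rcases Set.mem_uIcc.1 hz with h | h
      · linarith [h.1]
      · exact lt_of_lt_of_le hϱ h.1
    simp only [press]
    rw [Real.rpow_sub hz0, Real.rpow_sub hz0, Real.rpow_two]
    ring
  have hi1 : IntervalIntegrable (fun z : ℝ => z ^ (γ-2)) MeasureTheory.volume 1 ϱ :=
    intervalIntegral.intervalIntegrable_rpow (Or.inr h0)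
  have hi2 : IntervalIntegrable (fun z : ℝ => z ^ (-κ-2)) MeasureTheory.volume 1 ϱ :=
    intervalIntegral.intervalIntegrable_rpow (Or.inr h0)
  have e1 : (∫ z in (1:ℝ)..ϱ, z ^ (γ-2)) = (ϱ ^ (γ-1) - 1)/(γ-1) := by
    rw [integral_rpow (Or.inl (by linarith))]
    rw [show γ - 2 + 1 = γ - 1 by ring, Real.one_rpow]
  have e2 : (∫ z in (1:ℝ)..ϱ, z ^ (-κ-2)) = (ϱ ^ (-κ-1) - 1)/(-κ-1) := by
    rw [integral_rpow (Or.inr ⟨by intro h; linarith, h0⟩)]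
    rw [show -κ - 2 + 1 = -κ - 1 by ring, Real.one_rpow]
  have esplit : (∫ z in (1:ℝ)..ϱ, (z^(γ-2)/γ - z^(-κ-2)/κ))
      = (∫ z in (1:ℝ)..ϱ, z ^ (γ-2))/γ - (∫ z in (1:ℝ)..ϱ, z ^ (-κ-2))/κ := by
    rw [intervalIntegral.integral_sub (hi1.div_const γ) (hi2.div_const κ),
      intervalIntegral.integral_div, intervalIntegral.integral_div]
  have m1 : ϱ ^ (γ-1) * ϱ = ϱ ^ γ := by
    rw [← Real.rpow_add_one hϱ.ne' (γ-1)]; norm_num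
  have m2 : ϱ ^ (-κ-1) * ϱ = ϱ ^ (-κ) := by
    rw [← Real.rpow_add_one hϱ.ne' (-κ-1)]; norm_num
  have hne1 : γ - 1 ≠ 0 := by linarith
  have hne2 : -κ - 1 ≠ 0 := by linarith
  rw [Hpot, hcong, esplit, e1, e2, ← m1, ← m2]
  field_simp
  ring


lemma deriv_Hpot_eq {γ κ : ℝ} (hγ : 1 < γ) (hκ : 0 < κ) {b : ℝ} (hb : 0 < b) :
    deriv (Hpot γ κ) b
      = b^(γ-1)/(γ-1) - b^(-κ-1)/(κ+1) - (1/(γ*(γ-1)) + 1/(κ*(κ+1))) := by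
  have hγ0 : (0:ℝ) < γ := by linarith
  have hκ1 : (0:ℝ) < κ + 1 := by linarith
  have hne1 : γ - 1 ≠ 0 := by intro h; linarith [h]
  have hD : HasDerivAt (fun x : ℝ => x^γ/(γ*(γ-1)) + x^(-κ)/(κ*(κ+1))
      - (1/(γ*(γ-1)) + 1/(κ*(κ+1)))*x)
      (b^(γ-1)/(γ-1) - b^(-κ-1)/(κ+1) - (1/(γ*(γ-1)) + 1/(κ*(κ+1)))) b := by
    have d1 : HasDerivAt (fun x : ℝ => x ^ γ) (γ * b ^ (γ-1)) b :=
      Real.hasDerivAt_rpow_const (Or.inl hb.ne')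
    have d2 : HasDerivAt (fun x : ℝ => x ^ (-κ)) (-κ * b ^ (-κ-1)) b :=
      Real.hasDerivAt_rpow_const (Or.inl hb.ne')
    have d3 : HasDerivAt (fun x : ℝ => (1/(γ*(γ-1)) + 1/(κ*(κ+1)))*x)
        (1/(γ*(γ-1)) + 1/(κ*(κ+1))) b := by
      simpa using (hasDerivAt_id b).const_mul (1/(γ*(γ-1)) + 1/(κ*(κ+1)))
    have := ((d1.div_const (γ*(γ-1))).add (d2.div_const (κ*(κ+1)))).sub d3
    refine this.congr_deriv ?_
    field_simp
    ring
  have heq : Hpot γ κ =ᶠ[nhds b] (fun x : ℝ => x^γ/(γ*(γ-1)) + x^(-κ)/(κ*(κ+1))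
      - (1/(γ*(γ-1)) + 1/(κ*(κ+1)))*x) := by
    filter_upwards [Ioi_mem_nhds hb] with x hx
    exact Hpot_eq hγ hκ hx
  rw [heq.deriv_eq, hD.deriv]

lemma Hrel_eq {γ κ : ℝ} (hγ : 1 < γ) (hκ : 0 < κ) {ϱ b : ℝ} (hϱ : 0 < ϱ) (hb : 0 < b) :
    Hrel γ κ ϱ b = (ϱ^γ - b^γ - γ*b^(γ-1)*(ϱ-b))/(γ*(γ-1))
      + (ϱ^(-κ) - b^(-κ) + κ*b^(-κ-1)*(ϱ-b))/(κ*(κ+1)) := by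
  have hγ0 : (0:ℝ) < γ := by linarith
  have hκ1 : (0:ℝ) < κ + 1 := by linarith
  have hne1 : γ - 1 ≠ 0 := by intro h; linarith [h]
  rw [Hrel, Hpot_eq hγ hκ hϱ, Hpot_eq hγ hκ hb, deriv_Hpot_eq hγ hκ hb]
  field_simp
  ring

lemma tangent_rpow {γ : ℝ} (hγ : 1 < γ) {x y : ℝ} (hx : 0 < x) (hy : 0 < y) :
    y^γ + γ*y^(γ-1)*(x - y) ≤ x^γ := by
  have hs : (-1:ℝ) ≤ x/y - 1 := by
    have : 0 < x/y := div_pos hx hy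
    linarith
  have key := one_add_mul_self_le_rpow_one_add hs hγ.le
  rw [show (1:ℝ) + (x/y - 1) = x/y by ring, Real.div_rpow hx.le hy.le] at key
  have hyγ : 0 < y ^ γ := Real.rpow_pos_of_pos hy γ
  have h2 := mul_le_mul_of_nonneg_right key hyγ.le
  rw [div_mul_cancel₀ _ hyγ.ne'] at h2
  have e : y ^ (γ-1) * y = y ^ γ := by
    rw [← Real.rpow_add_one hy.ne' (γ-1)]; norm_num
  calc y^γ + γ*y^(γ-1)*(x - y)
      = (1 + γ * (x / y - 1)) * y ^ γ := by
        field_simp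
        linear_combination (γ*x - γ*y) * e
    _ ≤ x ^ γ := h2

lemma amgm_aux {κ : ℝ} (hκ : 0 < κ) {u : ℝ} (hu : 0 < u) :
    1 + κ ≤ u^(-κ) + κ*u := by
  have hκ1 : (0:ℝ) < κ + 1 := by linarith
  have h := Real.geom_mean_le_arith_mean2_weighted
    (by positivity : (0:ℝ) ≤ 1/(κ+1)) (by positivity : (0:ℝ) ≤ κ/(κ+1))
    (Real.rpow_nonneg hu.le (-κ)) hu.le (by field_simp; ring)
  have e1 : (u ^ (-κ)) ^ (1/(κ+1)) = u ^ (-κ/(κ+1)) := by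
    rw [← Real.rpow_mul hu.le]
    congr 1
    ring
  rw [e1, ← Real.rpow_add hu, show -κ/(κ+1) + κ/(κ+1) = 0 by ring, Real.rpow_zero] at h
  have h2 := mul_le_mul_of_nonneg_left h (le_of_lt hκ1)
  rw [mul_one] at h2
  calc 1 + κ = κ + 1 := by ring
    _ ≤ (κ+1) * (1/(κ+1) * u ^ (-κ) + κ/(κ+1) * u) := h2
    _ = u^(-κ) + κ*u := by field_simp

lemma tangent_rpow_neg {κ : ℝ} (hκ : 0 < κ) {x y : ℝ} (hx : 0 < x) (hy : 0 < y) :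
    y^(-κ) - κ*y^(-κ-1)*(x - y) ≤ x^(-κ) := by
  have hu : 0 < x/y := div_pos hx hy
  have key := amgm_aux hκ hu
  -- (x/y)^(-κ) = x^(-κ)/y^(-κ)
  have e0 : (x/y) ^ (-κ) = x^(-κ) / y^(-κ) := Real.div_rpow hx.le hy.le (-κ)
  have hyκ : 0 < y ^ (-κ) := Real.rpow_pos_of_pos hy (-κ)
  have h2 := mul_le_mul_of_nonneg_right key hyκ.le
  have e : y ^ (-κ-1) * y = y ^ (-κ) := by
    rw [← Real.rpow_add_one hy.ne' (-κ-1)]; norm_num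
  have e2 : (x/y)^(-κ) * y^(-κ) = x^(-κ) := by
    rw [e0, div_mul_cancel₀ _ hyκ.ne']
  -- (1+κ)*y^(-κ) ≤ ((x/y)^(-κ) + κ*(x/y)) * y^(-κ) = x^(-κ) + κ*(x/y)*y^(-κ)
  have e3 : (x/y) * y^(-κ) = x * y^(-κ-1) := by
    field_simp
    linear_combination (-1) * e
  nlinarith [h2, e, e3]

lemma cgamma_pos {γ : ℝ} (hγ : 1 < γ) : 0 < (1/2:ℝ)^γ + γ/2 - 1 := by
  have h := one_add_mul_self_lt_rpow_one_add (s := -(1/2)) (by norm_num) (by norm_num) hγ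
  rw [show (1:ℝ) + -(1/2) = 1/2 by norm_num] at h
  nlinarith [h]

lemma eta_pos {γ : ℝ} (hγ : 1 < γ) : 0 < 1 - (γ+1)*(1/2:ℝ)^γ := by
  have h := one_add_mul_self_lt_rpow_one_add (s := 1) (by norm_num) (by norm_num) hγ
  rw [show (1:ℝ) + 1 = 2 by norm_num] at h
  have h2 : (0:ℝ) < (2:ℝ)^γ := Real.rpow_pos_of_pos (by norm_num) γ
  have e2 : (1/2:ℝ)^γ * (2:ℝ)^γ = 1 := by
    rw [one_div, Real.inv_rpow (by norm_num : (0:ℝ) ≤ 2)]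
    field_simp
  nlinarith [Real.rpow_pos_of_pos (show (0:ℝ) < 1/2 by norm_num) γ, e2, h]

lemma low_gamma {γ b ϱ : ℝ} (hγ : 1 < γ) (hb : 0 < b) (hϱ : 0 < ϱ) (h : ϱ ≤ b/2) :
    ((1/2:ℝ)^γ + γ/2 - 1) * b^γ ≤ ϱ^γ - b^γ - γ*b^(γ-1)*(ϱ-b) := by
  have hb2 : 0 < b/2 := by linarith
  have t := tangent_rpow hγ hϱ hb2
  have eP : (b/2)^γ = (1/2:ℝ)^γ * b^γ := by
    rw [show b/2 = (1/2)*b by ring, Real.mul_rpow (by norm_num) hb.le]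
  have eP1 : (b/2)^(γ-1) = (1/2:ℝ)^(γ-1) * b^(γ-1) := by
    rw [show b/2 = (1/2)*b by ring, Real.mul_rpow (by norm_num) hb.le]
  have e2 : ((1:ℝ)/2)^(γ-1) = 2*(1/2:ℝ)^γ := by
    rw [Real.rpow_sub_one (by norm_num : (1/2:ℝ) ≠ 0)]
    ring
  have eZ : b^(γ-1)*b = b^γ := by
    rw [← Real.rpow_add_one hb.ne' (γ-1)]; norm_num
  have hZ : 0 ≤ b^(γ-1) := (Real.rpow_pos_of_pos hb _).le
  have hPl : (1/2:ℝ)^γ < 1/2 := by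
    calc (1/2:ℝ)^γ < (1/2:ℝ)^(1:ℝ) :=
          Real.rpow_lt_rpow_of_exponent_gt (by norm_num) (by norm_num) hγ
      _ = 1/2 := Real.rpow_one _
  rw [eP, eP1, e2] at t
  nlinarith [t, eZ, hZ, hPl,
    mul_nonneg (mul_nonneg (show (0:ℝ) ≤ γ*(1 - 2*(1/2:ℝ)^γ) by nlinarith) hZ)
      (show (0:ℝ) ≤ b/2 - ϱ by linarith)]

lemma high_gamma {γ b ϱ : ℝ} (hγ : 1 < γ) (hb : 0 < b) (h : 2*b ≤ ϱ) :
    (1 - (γ+1)*(1/2:ℝ)^γ) * ϱ^γ ≤ ϱ^γ - b^γ - γ*b^(γ-1)*(ϱ-b) := by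
  have hϱ2 : 0 < ϱ/2 := by linarith
  have t := tangent_rpow hγ hϱ2 hb
  have eP : (ϱ/2)^γ = (1/2:ℝ)^γ * ϱ^γ := by
    rw [show ϱ/2 = (1/2)*ϱ by ring, Real.mul_rpow (by norm_num) (by linarith : (0:ℝ) ≤ ϱ)]
  have eZ : b^(γ-1)*b = b^γ := by
    rw [← Real.rpow_add_one hb.ne' (γ-1)]; norm_num
  have hZ : 0 ≤ b^(γ-1) := (Real.rpow_pos_of_pos hb _).le
  rw [eP] at t
  nlinarith [t, eZ, hZ,
    mul_nonneg (mul_nonneg (show (0:ℝ) ≤ γ*(γ-1) by nlinarith) hZ)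
      (show (0:ℝ) ≤ ϱ/2 - b by linarith)]

end

set_option maxHeartbeats 1000000 in
/-- Coercivity of the relative pressure potential on the residual
range. -/
theorem Hrel_coercivity_res (γ κ bLow bHigh : ℝ)
    (hγ : 1 < γ) (hκ : 0 < κ) (h1 : 0 < bLow) (h2 : bLow ≤ bHigh) :
    ∃ c > 0, ∀ b ∈ Set.Icc bLow bHigh, ∀ ϱ : ℝ, 0 < ϱ →
      ϱ ∉ Set.Icc (bLow / 2) (2 * bHigh) →
      c * (ϱ ^ γ + ϱ ^ (-κ) + 1) ≤ Hrel γ κ ϱ b := by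
  have hγ0 : (0:ℝ) < γ := by linarith
  have hγ1 : (0:ℝ) < γ - 1 := by linarith
  have hA : (0:ℝ) < γ*(γ-1) := mul_pos hγ0 hγ1
  have hDD : (0:ℝ) < κ*(κ+1) := by nlinarith
  have hcγ : 0 < (1/2:ℝ)^γ + γ/2 - 1 := cgamma_pos hγ
  have hη : 0 < 1 - (γ+1)*(1/2:ℝ)^γ := eta_pos hγ
  have hbHigh : 0 < bHigh := lt_of_lt_of_le h1 h2
  have hbLowγ : 0 < bLow^γ := Real.rpow_pos_of_pos h1 γ
  set m1 : ℝ := ((1/2:ℝ)^γ + γ/2 - 1) * bLow^γ / (γ*(γ-1)) with hm1def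
  have hm1pos : 0 < m1 := by positivity
  set K : ℝ := (1+κ) * bLow^(-κ) / (κ*(κ+1)) with hKdef
  have hKpos : 0 < K := by
    have : 0 < bLow^(-κ) := Real.rpow_pos_of_pos h1 _
    positivity
  set lam : ℝ := min 1 (m1/(2*K)) with hlamdef
  have hlam0 : 0 < lam := lt_min one_pos (by positivity)
  have hlam1 : lam ≤ 1 := min_le_left _ _
  have hlamK : lam * K ≤ m1/2 := by
    calc lam * K ≤ (m1/(2*K)) * K :=
          mul_le_mul_of_nonneg_right (min_le_right _ _) hKpos.le
      _ = m1/2 := by field_simp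
  set Blow : ℝ := (bLow/2)^γ + 1 with hBlowdef
  have hBlowpos : 0 < Blow := by
    have : 0 < (bLow/2)^γ := Real.rpow_pos_of_pos (by linarith) γ
    positivity
  set Y0 : ℝ := (2*bHigh)^(-κ) with hY0def
  set X0 : ℝ := (2*bHigh)^γ with hX0def
  have hY0pos : 0 < Y0 := Real.rpow_pos_of_pos (by linarith) _
  have hX0pos : 0 < X0 := Real.rpow_pos_of_pos (by linarith) _
  set Bh : ℝ := 1 + (Y0 + 1)/X0 with hBhdef
  have hBhpos : 0 < Bh := by positivity
  set clow : ℝ := min (lam * (1/(κ*(κ+1)))) (m1/(2*Blow)) with hclowdef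
  set chigh : ℝ := (1 - (γ+1)*(1/2:ℝ)^γ)/((γ*(γ-1))*Bh) with hchighdef
  have hclowpos : 0 < clow := lt_min (by positivity) (by positivity)
  have hchighpos : 0 < chigh := by positivity
  refine ⟨min clow chigh, lt_min hclowpos hchighpos, ?_⟩
  intro b hb ϱ hϱ hout
  have hcle1 : min clow chigh ≤ clow := min_le_left _ _
  have hcle2 : min clow chigh ≤ chigh := min_le_right _ _
  have hcpos : 0 < min clow chigh := lt_min hclowpos hchighpos
  have hbpos : 0 < b := lt_of_lt_of_le h1 hb.1
  rw [Hrel_eq hγ hκ hϱ hbpos]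
  have hT1 : 0 ≤ ϱ^γ - b^γ - γ*b^(γ-1)*(ϱ-b) := by
    linarith only [tangent_rpow hγ hϱ hbpos]
  have hT2 : 0 ≤ ϱ^(-κ) - b^(-κ) + κ*b^(-κ-1)*(ϱ-b) := by
    linarith only [tangent_rpow_neg hκ hϱ hbpos]
  have hT1' : 0 ≤ (ϱ^γ - b^γ - γ*b^(γ-1)*(ϱ-b))/(γ*(γ-1)) := by positivity
  have hT2' : 0 ≤ (ϱ^(-κ) - b^(-κ) + κ*b^(-κ-1)*(ϱ-b))/(κ*(κ+1)) := by positivity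
  have hϱκpos : 0 < ϱ^(-κ) := Real.rpow_pos_of_pos hϱ _
  have hϱγpos : 0 < ϱ^γ := Real.rpow_pos_of_pos hϱ _
  rw [Set.mem_Icc, not_and_or] at hout
  push_neg at hout
  rcases hout with hlow | hhigh
  · -- residual low: ϱ < bLow/2
    have hϱle : ϱ ≤ b/2 := by linarith [hb.1]
    -- T1 lower bound
    have hbb : bLow^γ ≤ b^γ := Real.rpow_le_rpow h1.le hb.1 hγ0.le
    have hN1 : ((1/2:ℝ)^γ + γ/2 - 1) * bLow^γ ≤ ϱ^γ - b^γ - γ*b^(γ-1)*(ϱ-b) := by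
      have hlg := low_gamma hγ hbpos hϱ hϱle
      have h' : ((1/2:ℝ)^γ + γ/2 - 1) * bLow^γ ≤ ((1/2:ℝ)^γ + γ/2 - 1) * b^γ :=
        mul_le_mul_of_nonneg_left hbb hcγ.le
      linarith only [h', hlg]
    have hTm1 : m1 ≤ (ϱ^γ - b^γ - γ*b^(γ-1)*(ϱ-b))/(γ*(γ-1)) := by
      rw [hm1def, div_le_div_iff_of_pos_right hA]
      exact hN1
    -- T2 lower bound
    have hbin : b^(-κ) ≤ bLow^(-κ) := Real.rpow_le_rpow_of_nonpos h1 hb.1 (by linarith)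
    have hbin1 : b^(-κ-1) * b = b^(-κ) := by
      rw [← Real.rpow_add_one hbpos.ne' _]; norm_num
    have hb1pos : 0 ≤ b^(-κ-1) := (Real.rpow_pos_of_pos hbpos _).le
    have hN2 : ϱ^(-κ) - (1+κ)*bLow^(-κ) ≤ ϱ^(-κ) - b^(-κ) + κ*b^(-κ-1)*(ϱ-b) := by
      nlinarith only [mul_nonneg (mul_nonneg hκ.le hb1pos) hϱ.le, hbin, hbin1, hκ]
    have hTq : (ϱ^(-κ) - (1+κ)*bLow^(-κ))/(κ*(κ+1))
        ≤ (ϱ^(-κ) - b^(-κ) + κ*b^(-κ-1)*(ϱ-b))/(κ*(κ+1)) := by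
      rw [div_le_div_iff_of_pos_right hDD]
      exact hN2
    -- lam-combination for T2
    have hTlam : lam * ((ϱ^(-κ) - (1+κ)*bLow^(-κ))/(κ*(κ+1)))
        ≤ (ϱ^(-κ) - b^(-κ) + κ*b^(-κ-1)*(ϱ-b))/(κ*(κ+1)) := by
      nlinarith only [mul_nonneg (show (0:ℝ) ≤ 1 - lam by linarith only [hlam1]) hT2',
        mul_nonneg hlam0.le (sub_nonneg.2 hTq)]
    have hsplit : lam * ((ϱ^(-κ) - (1+κ)*bLow^(-κ))/(κ*(κ+1)))
        = lam * (1/(κ*(κ+1))) * ϱ^(-κ) - lam * K := by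
      rw [hKdef]; field_simp
    -- RHS upper bounds
    have hX : ϱ^γ ≤ (bLow/2)^γ := Real.rpow_le_rpow hϱ.le hlow.le hγ0.le
    have hcY : min clow chigh * ϱ^(-κ) ≤ lam * (1/(κ*(κ+1))) * ϱ^(-κ) :=
      mul_le_mul_of_nonneg_right (le_trans hcle1 (min_le_left _ _)) hϱκpos.le
    have hcX : min clow chigh * (ϱ^γ + 1) ≤ m1/2 := by
      calc min clow chigh * (ϱ^γ + 1) ≤ (m1/(2*Blow)) * Blow := by
            apply mul_le_mul (le_trans hcle1 (min_le_right _ _)) (by rw [hBlowdef]; linarith)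
              (by positivity) (by positivity)
        _ = m1/2 := by field_simp
    linarith only [hTm1, hTlam, hsplit.symm.le, hcY, hcX, hlamK]
  · -- residual high: 2*bHigh < ϱ
    have h2b : 2*b ≤ ϱ := by linarith [hb.2]
    have hTb : (1 - (γ+1)*(1/2:ℝ)^γ) * ϱ^γ ≤ ϱ^γ - b^γ - γ*b^(γ-1)*(ϱ-b) :=
      high_gamma hγ hbpos h2b
    have hT1ge : (1 - (γ+1)*(1/2:ℝ)^γ) * ϱ^γ / (γ*(γ-1))
        ≤ (ϱ^γ - b^γ - γ*b^(γ-1)*(ϱ-b))/(γ*(γ-1)) := by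
      rw [div_le_div_iff_of_pos_right hA]
      exact hTb
    have hY : ϱ^(-κ) ≤ Y0 := Real.rpow_le_rpow_of_nonpos (by linarith) hhigh.le (by linarith)
    have hXge : X0 ≤ ϱ^γ := Real.rpow_le_rpow (by linarith) hhigh.le hγ0.le
    have hY1 : Y0 + 1 ≤ (Y0+1)/X0 * ϱ^γ := by
      calc Y0 + 1 = (Y0+1)/X0 * X0 := by field_simp
        _ ≤ (Y0+1)/X0 * ϱ^γ := mul_le_mul_of_nonneg_left hXge (by positivity)
    have hsum : ϱ^γ + ϱ^(-κ) + 1 ≤ Bh * ϱ^γ := by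
      rw [hBhdef]; nlinarith only [hY, hY1, hϱγpos]
    have hfin : min clow chigh * (ϱ^γ + ϱ^(-κ) + 1) ≤ chigh * (Bh * ϱ^γ) := by
      apply mul_le_mul hcle2 hsum (by positivity) hchighpos.le
    have heq : chigh * (Bh * ϱ^γ) = (1 - (γ+1)*(1/2:ℝ)^γ) * ϱ^γ / (γ*(γ-1)) := by
      rw [hchighdef]; field_simp
    calc min clow chigh * (ϱ^γ + ϱ^(-κ) + 1) ≤ chigh * (Bh * ϱ^γ) := hfin
      _ = (1 - (γ+1)*(1/2:ℝ)^γ) * ϱ^γ / (γ*(γ-1)) := heq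
      _ ≤ (ϱ^γ - b^γ - γ*b^(γ-1)*(ϱ-b))/(γ*(γ-1)) := hT1ge
      _ ≤ (ϱ^γ - b^γ - γ*b^(γ-1)*(ϱ-b))/(γ*(γ-1))
          + (ϱ^(-κ) - b^(-κ) + κ*b^(-κ-1)*(ϱ-b))/(κ*(κ+1)) := by linarith only [hT2']
end
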